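/- arXiv:1606.03898 — 4 statements merged into one kernel-verified Lean document; each statement's English description precedes it below -/
import Mathlib

section
/- Let N be a network on a finite set V with |V| ≥ 2, and let x, y, z ∈ V be pairwise distinct. Then the maximum flow value from x to z is at least the minimum of the maximum flow value from x to y and the maximum flow value from y to z: φ_{xz} ≥ min{φ_{xy}, φ_{yz}}. -/
/-!
Max-flow min-cut. Let `f` be a maximum flow from `x` to `z` and `S` the set of vertices reachable
from `x` by residual arcs of `f`. Then `z ∉ S`, since augmenting `f` along a residual path would
increase its value; and every arc leaving `S` is saturated while every arc entering `S` carries no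
flow, so the capacity of the cut `S` is `φ_{xz}`. Any flow from a vertex of `S` to a vertex outside
`S` has value at most this capacity, and `y` lies either in `S` or outside it, so `φ_{yz} ≤ φ_{xz}`
or `φ_{xy} ≤ φ_{xz}`.
-/

/-- A flow from `s` to `t` in the network with capacity `c`: bounded by the
capacity on every arc and conserving flow at every vertex other than `s`, `t`. -/
def IsFlow {V : Type*} [Fintype V] [DecidableEq V]
    (c : V → V → ℕ) (s t : V) (f : V → V → ℕ) : Prop :=
  (∀ x y : V, x ≠ y → f x y ≤ c x y) ∧
  ∀ x : V, x ≠ s → x ≠ t →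
    ∑ y ∈ Finset.univ.erase x, f x y = ∑ y ∈ Finset.univ.erase x, f y x

/-- The value of a flow `f` from `s`: outflow of `s` minus inflow of `s`. -/
def flowValue {V : Type*} [Fintype V] [DecidableEq V]
    (f : V → V → ℕ) (s : V) : ℤ :=
  (∑ y ∈ Finset.univ.erase s, (f s y : ℤ)) -
    ∑ y ∈ Finset.univ.erase s, (f y s : ℤ)

/-- The maximum flow value `φ_{st}` from `s` to `t` in the network `c`. -/
noncomputable def maxFlow {V : Type*} [Fintype V] [DecidableEq V]
    (c : V → V → ℕ) (s t : V) : ℕ :=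
  sSup {n : ℕ | ∃ f : V → V → ℕ, IsFlow c s t f ∧ flowValue f s = (n : ℤ)}

/-- The flow relation `𝔉(N)`: `x ⪰ y` iff `x = y` or `x ≠ y` and `φ_{xy} ≥ φ_{yx}`. -/
def FlowRel {V : Type*} [Fintype V] [DecidableEq V]
    (c : V → V → ℕ) (x y : V) : Prop :=
  x = y ∨ (x ≠ y ∧ maxFlow c y x ≤ maxFlow c x y)

/-- A relation is complete if any two elements are comparable. -/
def CompleteRel {V : Type*} (R : V → V → Prop) : Prop :=
  ∀ x y : V, R x y ∨ R y x

/-- The strict part `S(R)` of a relation `R`. -/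
def StrictPart {V : Type*} (R : V → V → Prop) (x y : V) : Prop :=
  R x y ∧ ¬ R y x

/-- A relation is quasi-transitive if its strict part is transitive. -/
def QuasiTransitive {V : Type*} (R : V → V → Prop) : Prop :=
  Transitive (StrictPart R)

/-- The outdegree of `x` in the network `c`. -/
def outdeg {V : Type*} [Fintype V] [DecidableEq V] (c : V → V → ℕ) (x : V) : ℕ :=
  ∑ y ∈ Finset.univ.erase x, c x y

/-- The indegree of `x` in the network `c`. -/
def indeg {V : Type*} [Fintype V] [DecidableEq V] (c : V → V → ℕ) (x : V) : ℕ :=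
  ∑ y ∈ Finset.univ.erase x, c y x

section MaxFlowMinCut

variable {V : Type*}

def WithinCapacity (c f : V → V → ℕ) : Prop :=
  ∀ x y : V, x ≠ y → f x y ≤ c x y

def Residual (c f : V → V → ℕ) (u v : V) : Prop :=
  u ≠ v ∧ (f u v < c u v ∨ 0 < f v u)

variable [DecidableEq V]

def arcIndicator (p q : V) : V → V → ℕ :=
  fun a b => if a = p ∧ b = q then 1 else 0

variable [Fintype V] {c f : V → V → ℕ} {s t : V} {S : Finset V}

def cutCap (c : V → V → ℕ) (S : Finset V) : ℕ :=
  ∑ u ∈ S, ∑ v ∈ Sᶜ, c u v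

lemma flowValue_eq_sum (f : V → V → ℕ) (v : V) :
    flowValue f v = ∑ w, ((f v w : ℤ) - f w v) := by
  rw [flowValue, ← Finset.sum_sub_distrib]
  exact Finset.sum_erase _ (sub_self _)

lemma flowValue_add (f g : V → V → ℕ) (v : V) :
    flowValue (f + g) v = flowValue f v + flowValue g v := by
  simp only [flowValue_eq_sum, Pi.add_apply, Nat.cast_add, ← Finset.sum_add_distrib]
  exact Finset.sum_congr rfl fun _ _ => by ring

lemma flowValue_arcIndicator (p q v : V) :
    flowValue (arcIndicator p q) v = (if v = p then 1 else 0) - (if v = q then 1 else 0) := by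
  simp only [flowValue_eq_sum, arcIndicator, ite_and, Finset.sum_sub_distrib]
  split_ifs <;> simp_all

lemma sum_flowValue (f : V → V → ℕ) (S : Finset V) :
    ∑ u ∈ S, flowValue f u = ∑ u ∈ S, ∑ v ∈ Sᶜ, ((f u v : ℤ) - f v u) := by
  have hS : ∑ u ∈ S, ∑ v ∈ S, ((f u v : ℤ) - f v u) = 0 := by
    simp only [Finset.sum_sub_distrib]
    rw [Finset.sum_comm, sub_self]
  simp only [flowValue_eq_sum, ← Finset.sum_add_sum_compl S, Finset.sum_add_distrib, hS, zero_add]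

lemma isFlow_iff :
    IsFlow c s t f ↔ WithinCapacity c f ∧ ∀ v, v ≠ s → v ≠ t → flowValue f v = 0 := by
  simp only [IsFlow, WithinCapacity, flowValue, sub_eq_zero]
  norm_cast

lemma IsFlow.withinCapacity (hf : IsFlow c s t f) : WithinCapacity c f :=
  hf.1

lemma IsFlow.flowValue_eq_zero (hf : IsFlow c s t f) {v : V} (hvs : v ≠ s) (hvt : v ≠ t) :
    flowValue f v = 0 :=
  (isFlow_iff.1 hf).2 v hvs hvt

lemma IsFlow.flowValue_eq_sum_cut (hf : IsFlow c s t f) (hs : s ∈ S) (ht : t ∉ S) :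
    flowValue f s = ∑ u ∈ S, ∑ v ∈ Sᶜ, ((f u v : ℤ) - f v u) := by
  rw [← sum_flowValue, ← Finset.add_sum_erase S _ hs, Finset.sum_eq_zero, add_zero]
  intro u hu
  exact hf.flowValue_eq_zero (Finset.ne_of_mem_erase hu)
    (fun hut => ht (hut ▸ Finset.mem_of_mem_erase hu))

lemma IsFlow.flowValue_le_cutCap (hf : IsFlow c s t f) (hs : s ∈ S) (ht : t ∉ S) :
    flowValue f s ≤ cutCap c S := by
  rw [hf.flowValue_eq_sum_cut hs ht, cutCap]
  push_cast
  gcongr with u hu v hv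
  have huv : u ≠ v := fun h => Finset.mem_compl.1 hv (h ▸ hu)
  have := hf.withinCapacity u v huv
  omega

lemma IsFlow.flowValue_eq_cutCap (hf : IsFlow c s t f) (hs : s ∈ S) (ht : t ∉ S)
    (hsat : ∀ u ∈ S, ∀ v ∉ S, f u v = c u v ∧ f v u = 0) :
    flowValue f s = cutCap c S := by
  rw [hf.flowValue_eq_sum_cut hs ht, cutCap]
  push_cast
  refine Finset.sum_congr rfl fun u hu => Finset.sum_congr rfl fun v hv => ?_
  obtain ⟨hfuv, hfvu⟩ := hsat u hu v (Finset.mem_compl.1 hv)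
  simp [hfuv, hfvu]

lemma isFlow_zero (c : V → V → ℕ) (s t : V) : IsFlow c s t 0 :=
  ⟨fun _ _ _ => Nat.zero_le _, fun _ _ _ => rfl⟩

lemma bddAbove_flowValues (c : V → V → ℕ) (hst : s ≠ t) :
    BddAbove {n : ℕ | ∃ f, IsFlow c s t f ∧ flowValue f s = n} := by
  refine ⟨cutCap c {s}, fun n ⟨f, hf, hval⟩ => ?_⟩
  have := hf.flowValue_le_cutCap (Finset.mem_singleton_self s)
    (Finset.notMem_singleton.2 hst.symm)
  omega

lemma le_maxFlow (hst : s ≠ t) (hf : IsFlow c s t f) {n : ℕ} (hval : flowValue f s = n) :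
    n ≤ maxFlow c s t :=
  le_csSup (bddAbove_flowValues c hst) ⟨f, hf, hval⟩

lemma exists_flowValue_eq_maxFlow (c : V → V → ℕ) (hst : s ≠ t) :
    ∃ f, IsFlow c s t f ∧ flowValue f s = maxFlow c s t :=
  Nat.sSup_mem (s := {n : ℕ | ∃ f, IsFlow c s t f ∧ flowValue f s = n})
    ⟨0, 0, isFlow_zero c s t, by simp [flowValue]⟩ (bddAbove_flowValues c hst)

lemma maxFlow_le_cutCap (hs : s ∈ S) (ht : t ∉ S) : maxFlow c s t ≤ cutCap c S := by
  obtain ⟨f, hf, hval⟩ := exists_flowValue_eq_maxFlow c fun (hst : s = t) => ht (hst ▸ hs)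
  have := hf.flowValue_le_cutCap hs ht
  omega

lemma WithinCapacity.exists_augment_arc (hf : WithinCapacity c f) {u v : V}
    (huv : Residual c f u v) :
    ∃ g, WithinCapacity c g ∧ (∀ a b, ¬(a = u ∧ b = v) → ¬(a = v ∧ b = u) → g a b = f a b) ∧
      ∀ a, flowValue g a = flowValue f a + (if a = u then 1 else 0) - (if a = v then 1 else 0) := by
  obtain ⟨-, hlt | hpos⟩ := huv
  · refine ⟨f + arcIndicator u v, fun a b hab => ?_,
      fun a b h _ => by simp [arcIndicator, h], fun a => ?_⟩
    · by_cases h : a = u ∧ b = v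
      · obtain ⟨rfl, rfl⟩ := h
        simpa [arcIndicator] using hlt
      · simpa [arcIndicator, h] using hf a b hab
    · rw [flowValue_add, flowValue_arcIndicator, add_sub_assoc]
  · set g := fun a b => f a b - arcIndicator v u a b
    have hfg : f = g + arcIndicator v u := by
      ext a b
      by_cases h : a = v ∧ b = u
      · obtain ⟨rfl, rfl⟩ := h
        simp [g, arcIndicator]
        omega
      · simp [g, arcIndicator, h]
    refine ⟨g, fun a b hab => (Nat.sub_le _ _).trans (hf a b hab),
      fun a b _ h => by simp [g, arcIndicator, h], fun a => ?_⟩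
    rw [hfg, flowValue_add, flowValue_arcIndicator]
    ring

lemma WithinCapacity.exists_augment_chain (hf : WithinCapacity c f) (u : V) (l : List V)
    (hl : (u :: l).IsChain (Residual c f)) :
    ∃ g, WithinCapacity c g ∧ (∀ a b, a ∉ u :: l ∨ b ∉ u :: l → g a b = f a b) ∧
      ∀ a, flowValue g a = flowValue f a + (if a = u then 1 else 0) -
        (if a = (u :: l).getLast (List.cons_ne_nil u l) then 1 else 0) := by
  match l with
  | [] => exact ⟨f, hf, fun _ _ _ => rfl, fun a => (add_sub_cancel_right _ _).symm⟩
  | v :: l =>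
    by_cases hu : u ∈ v :: l
    · -- a residual walk that revisits `u` can be shortened to its part after the last visit
      obtain ⟨l₁, l₂, hsplit⟩ := List.append_of_mem hu
      have hlen : l₂.length ≤ l.length := by
        have := congrArg List.length hsplit
        simp only [List.length_cons, List.length_append] at this
        omega
      rw [hsplit] at hl ⊢
      obtain ⟨g, hg, hgf, hgval⟩ := hf.exists_augment_chain u l₂
        (hl.suffix (List.suffix_cons_iff.2 (Or.inr (List.suffix_append _ _))))
      have hsub : u :: l₂ ⊆ u :: (l₁ ++ u :: l₂) := by
        intro x
        simp only [List.mem_cons, List.mem_append]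
        tauto
      have hlast : (u :: (l₁ ++ u :: l₂)).getLast (List.cons_ne_nil _ _)
          = (u :: l₂).getLast (List.cons_ne_nil _ _) := by
        simp [List.getLast_cons]
      refine ⟨g, hg, fun a b hab => hgf a b (hab.imp (mt (@hsub a)) (mt (@hsub b))), ?_⟩
      rwa [hlast]
    · obtain ⟨g, hg, hgf, hgval⟩ := hf.exists_augment_chain v l hl.tail
      have hres : Residual c g u v := by
        have := (List.isChain_cons_cons.1 hl).1
        rwa [Residual, hgf u v (Or.inl hu), hgf v u (Or.inr hu)]
      obtain ⟨g', hg', hg'g, hg'val⟩ := hg.exists_augment_arc hres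
      refine ⟨g', hg', fun a b hab => ?_, fun a => ?_⟩
      · rw [hg'g a b (by rintro ⟨rfl, rfl⟩; simp at hab) (by rintro ⟨rfl, rfl⟩; simp at hab)]
        exact hgf a b (hab.imp (mt (List.mem_cons_of_mem u)) (mt (List.mem_cons_of_mem u)))
      · rw [hg'val, hgval, List.getLast_cons_cons]
        ring
termination_by l.length

lemma IsFlow.exists_flowValue_add_one (hf : IsFlow c s t f) (hst : s ≠ t)
    (hpath : Relation.ReflTransGen (Residual c f) s t) :
    ∃ g, IsFlow c s t g ∧ flowValue g s = flowValue f s + 1 := by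
  obtain ⟨l, hl, hlast⟩ := List.exists_isChain_cons_of_relationReflTransGen hpath
  obtain ⟨g, hg, -, hgval⟩ := hf.withinCapacity.exists_augment_chain s l hl
  rw [hlast] at hgval
  refine ⟨g, isFlow_iff.2 ⟨hg, fun v hvs hvt => ?_⟩, by simp [hgval, hst]⟩
  simp [hgval, hvs, hvt, hf.flowValue_eq_zero hvs hvt]

lemma exists_cutCap_le_maxFlow (c : V → V → ℕ) (hst : s ≠ t) :
    ∃ S : Finset V, s ∈ S ∧ t ∉ S ∧ cutCap c S ≤ maxFlow c s t := by
  classical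
  obtain ⟨f, hf, hval⟩ := exists_flowValue_eq_maxFlow c hst
  let S := Finset.univ.filter (Relation.ReflTransGen (Residual c f) s)
  have hmem {u : V} : u ∈ S ↔ Relation.ReflTransGen (Residual c f) s u := by simp [S]
  have hsS : s ∈ S := hmem.2 .refl
  have htS : t ∉ S := by
    intro htS
    obtain ⟨g, hg, hgval⟩ := hf.exists_flowValue_add_one hst (hmem.1 htS)
    have := le_maxFlow hst hg (n := maxFlow c s t + 1) (by rw [hgval, hval]; push_cast; rfl)
    omega
  have hsat : ∀ u ∈ S, ∀ v ∉ S, f u v = c u v ∧ f v u = 0 := by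
    intro u hu v hv
    have huv : u ≠ v := fun h => hv (h ▸ hu)
    have hnres : ¬Residual c f u v := fun h => hv (hmem.2 ((hmem.1 hu).tail h))
    have := hf.withinCapacity u v huv
    simp only [Residual, not_and, not_or, not_lt] at hnres
    obtain ⟨h1, h2⟩ := hnres huv
    omega
  refine ⟨S, hsS, htS, ?_⟩
  have := hf.flowValue_eq_cutCap hsS htS hsat
  omega

end MaxFlowMinCut

theorem stmt0_general {V : Type*} [Fintype V] [DecidableEq V]
    (c : V → V → ℕ)
    (x y z : V) (hxz : x ≠ z) :
    min (maxFlow c x y) (maxFlow c y z) ≤ maxFlow c x z := by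
  obtain ⟨S, hxS, hzS, hcut⟩ := exists_cutCap_le_maxFlow c hxz
  by_cases hy : y ∈ S
  · calc min (maxFlow c x y) (maxFlow c y z) ≤ maxFlow c y z := min_le_right _ _
      _ ≤ cutCap c S := maxFlow_le_cutCap hy hzS
      _ ≤ maxFlow c x z := hcut
  · calc min (maxFlow c x y) (maxFlow c y z) ≤ maxFlow c x y := min_le_left _ _
      _ ≤ cutCap c S := maxFlow_le_cutCap hxS hy
      _ ≤ maxFlow c x z := hcut

/-- Gomory–Hu inequality for maximum flow values:
`φ_{xz} ≥ min{φ_{xy}, φ_{yz}}` for pairwise distinct `x, y, z`. -/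
theorem stmt0 {V : Type*} [Fintype V] [DecidableEq V]
    (hV : 2 ≤ Fintype.card V) (c : V → V → ℕ)
    (x y z : V) (hxy : x ≠ y) (hyz : y ≠ z) (hxz : x ≠ z) :
    min (maxFlow c x y) (maxFlow c y z) ≤ maxFlow c x z :=
  stmt0_general c x y z hxz
end

section
/- Let V be a finite set with |V| ≥ 2, A = V² ∖ {(x,x) : x ∈ V}, and let θ : A → ℝ satisfy the Gomory–Hu condition. Then the relation R(θ) = {(x,y) ∈ A : θ(x,y) ≥ θ(y,x)} ∪ {(x,x) : x ∈ V} is complete and quasi-transitive. -/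
/-- A linear order relation: complete, transitive and antisymmetric. -/
def IsLinearRel {V : Type*} (L : V → V → Prop) : Prop :=
  CompleteRel L ∧ Transitive L ∧ ∀ x y : V, L x y → L y x → x = y

/-- A relation `P` is acyclic if for every sequence of `m ≥ 2` distinct elements
whose consecutive pairs are related by `P`, the last element is not related to
the first one. -/
def AcyclicRel {V : Type*} (P : V → V → Prop) : Prop :=
  ∀ (x y : V) (l : List V), (x :: (l ++ [y])).Nodup →
    List.Chain' P (x :: (l ++ [y])) → ¬ P y x

/-- The set `𝐋_⋄(R)` of linear refinements of `R`. -/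
def linRefinements {V : Type*} (R : V → V → Prop) : Set (V → V → Prop) :=
  {L | IsLinearRel L ∧ ∀ x y : V, L x y → R x y}

/-- The set `𝐋^⋄(Q)` of linear extensions of `Q`. -/
def linExtensions {V : Type*} (Q : V → V → Prop) : Set (V → V → Prop) :=
  {L | IsLinearRel L ∧ ∀ x y : V, Q x y → L x y}

/-- `θ` satisfies the Gomory–Hu condition: for pairwise distinct `x, y, z`,
`θ(x,z) ≥ min{θ(x,y), θ(y,z)}`. -/
def GomoryHu {V : Type*} (θ : V → V → ℝ) : Prop :=
  ∀ x y z : V, x ≠ y → y ≠ z → x ≠ z → min (θ x y) (θ y z) ≤ θ x z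

/-- The relation `R(θ)` induced by `θ`: `x ⪰ y` iff `x = y`, or `x ≠ y` and
`θ(x,y) ≥ θ(y,x)`. -/
def RelOf {V : Type*} (θ : V → V → ℝ) (x y : V) : Prop :=
  x = y ∨ (x ≠ y ∧ θ y x ≤ θ x y)

theorem completeRel_relOf {V : Type*} (θ : V → V → ℝ) : CompleteRel (RelOf θ) := by
  intro x y
  by_cases hxy : x = y
  · exact Or.inl (Or.inl hxy)
  · rcases le_total (θ y x) (θ x y) with h | h
    · exact Or.inl (Or.inr ⟨hxy, h⟩)
    · exact Or.inr (Or.inr ⟨Ne.symm hxy, h⟩)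

theorem strictPart_relOf_iff {V : Type*} {θ : V → V → ℝ} {x y : V} :
    StrictPart (RelOf θ) x y ↔ x ≠ y ∧ θ y x < θ x y := by
  simp only [StrictPart, RelOf, not_or, not_and, not_le]
  constructor
  · rintro ⟨rfl | ⟨hxy, -⟩, hyx, hlt⟩
    · exact absurd rfl hyx
    · exact ⟨hxy, hlt (Ne.symm hxy)⟩
  · rintro ⟨hxy, hlt⟩
    exact ⟨Or.inr ⟨hxy, hlt.le⟩, Ne.symm hxy, fun _ => hlt⟩

/- If `θ x z ≤ θ z x`, then with `m = min (θ x y) (θ y z)` the Gomory–Hu condition gives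
`m ≤ θ x z ≤ θ z x`, hence `m ≤ θ z y` and `m ≤ θ y x`; either choice of `m` then contradicts
`θ y x < θ x y` or `θ z y < θ y z`. -/
theorem GomoryHu.swap_lt_trans {V : Type*} {θ : V → V → ℝ} (hθ : GomoryHu θ) {x y z : V}
    (hxy : x ≠ y) (hyz : y ≠ z) (hxz : x ≠ z) (h₁ : θ y x < θ x y) (h₂ : θ z y < θ y z) :
    θ z x < θ x z := by
  by_contra! h
  have hxyz := hθ x y z hxy hyz hxz
  have hzxy := hθ z x y (Ne.symm hxz) hxy (Ne.symm hyz)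
  have hyzx := hθ y z x hyz (Ne.symm hxz) (Ne.symm hxy)
  rw [min_le_iff] at hxyz hzxy hyzx
  rcases hxyz with h₃ | h₃ <;> rcases hzxy with h₄ | h₄ <;> rcases hyzx with h₅ | h₅ <;> linarith

theorem GomoryHu.quasiTransitive_relOf {V : Type*} {θ : V → V → ℝ} (hθ : GomoryHu θ) :
    QuasiTransitive (RelOf θ) := by
  intro x y z
  simp only [strictPart_relOf_iff]
  rintro ⟨hxy, h₁⟩ ⟨hyz, h₂⟩
  have hxz : x ≠ z := by
    rintro rfl
    exact lt_asymm h₁ h₂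
  exact ⟨hxz, hθ.swap_lt_trans hxy hyz hxz h₁ h₂⟩

theorem stmt1_general {V : Type*}
    (θ : V → V → ℝ) (hθ : GomoryHu θ) :
    CompleteRel (RelOf θ) ∧ QuasiTransitive (RelOf θ) :=
  ⟨completeRel_relOf θ, hθ.quasiTransitive_relOf⟩

/-- If `θ` satisfies the Gomory–Hu condition, then `R(θ)` is complete and
quasi-transitive. -/
theorem stmt1 {V : Type*} [Fintype V] (hV : 2 ≤ Fintype.card V)
    (θ : V → V → ℝ) (hθ : GomoryHu θ) :
    CompleteRel (RelOf θ) ∧ QuasiTransitive (RelOf θ) :=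
  stmt1_general θ hθ
end

section
/- Let R be a complete and quasi-transitive relation on a finite set V with |V| ≥ 2, and let N_R be the network on V with capacity c_R(x,y) = 1 if (x,y) is in the strict part S(R) and c_R(x,y) = 0 otherwise. Then for every arc (x,y): (i) the maximum flow value φ^{N_R}_{xy} is positive if and only if (x,y) ∈ S(R); (ii) φ^{N_R}_{xy} = φ^{N_R}_{yx} = 0 if and only if both (x,y) ∈ R and (y,x) ∈ R. -/
/-!
If `(x, y) ∉ S(R)`, the set `A` consisting of `x` and its strict `R`-successors does not
contain `y`, and by quasi-transitivity no arc of `N_R` leaves `A`. Conservation at the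
vertices of `A` other than `x` then forces every flow from `x` to `y` to have nonpositive
value, so `φ_{xy} = 0`; if `(x, y) ∈ S(R)`, the arc itself carries a flow of value `1`.
Part (ii) follows from (i) by completeness.
-/

open Finset

/-- The flow on arcs inside `A` is counted on both sides. -/
lemma sum_sum_le_sum_sum_of_forall_not_mem {V : Type*} [Fintype V] (f : V → V → ℕ)
    (A : Finset V) (hcut : ∀ a ∈ A, ∀ b ∉ A, f a b = 0) :
    ∑ a ∈ A, ∑ y, f a y ≤ ∑ a ∈ A, ∑ y, f y a :=
  calc ∑ a ∈ A, ∑ y, f a y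
      = ∑ a ∈ A, ∑ y ∈ A, f a y := by
        refine sum_congr rfl fun a ha => (sum_subset (subset_univ A) ?_).symm
        exact fun b _ hb => hcut a ha b hb
    _ = ∑ a ∈ A, ∑ y ∈ A, f y a := sum_comm
    _ ≤ ∑ a ∈ A, ∑ y, f y a :=
        sum_le_sum fun a _ => sum_le_sum_of_subset (subset_univ A)

section Flows

variable {V : Type*} [Fintype V] [DecidableEq V]

def flowValues (c : V → V → ℕ) (s t : V) : Set ℕ :=
  {n : ℕ | ∃ f : V → V → ℕ, IsFlow c s t f ∧ flowValue f s = (n : ℤ)}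

lemma maxFlow_eq_sSup_flowValues (c : V → V → ℕ) (s t : V) :
    maxFlow c s t = sSup (flowValues c s t) := rfl

lemma zero_mem_flowValues (c : V → V → ℕ) (s t : V) : 0 ∈ flowValues c s t :=
  ⟨fun _ _ => 0, ⟨fun _ _ _ => Nat.zero_le _, fun _ _ _ => rfl⟩, by simp [flowValue]⟩

lemma IsFlow.flowValue_le_outdeg {c : V → V → ℕ} {s t : V} {f : V → V → ℕ}
    (hf : IsFlow c s t f) : flowValue f s ≤ outdeg c s := by
  have hout : ∑ y ∈ univ.erase s, (f s y : ℤ) ≤ ∑ y ∈ univ.erase s, (c s y : ℤ) :=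
    sum_le_sum fun y hy => by exact_mod_cast hf.1 s y (ne_of_mem_erase hy).symm
  have hin : 0 ≤ ∑ y ∈ univ.erase s, (f y s : ℤ) := sum_nonneg fun _ _ => by positivity
  simp only [flowValue, outdeg, Nat.cast_sum]
  linarith

lemma bddAbove_flowValues_s4 (c : V → V → ℕ) (s t : V) : BddAbove (flowValues c s t) :=
  ⟨outdeg c s, by
    rintro n ⟨f, hf, hval⟩
    exact_mod_cast hval ▸ hf.flowValue_le_outdeg⟩

lemma maxFlow_eq_zero_of_forall_flowValue_nonpos {c : V → V → ℕ} {s t : V}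
    (h : ∀ f, IsFlow c s t f → flowValue f s ≤ 0) : maxFlow c s t = 0 := by
  rw [maxFlow_eq_sSup_flowValues, ← Nat.le_zero]
  refine csSup_le ⟨0, zero_mem_flowValues c s t⟩ ?_
  rintro n ⟨f, hf, hval⟩
  exact_mod_cast hval ▸ h f hf

lemma IsFlow.flowValue_nonpos_of_cut {c : V → V → ℕ} {s t : V} {f : V → V → ℕ}
    (hf : IsFlow c s t f) (A : Finset V) (hs : s ∈ A) (ht : t ∉ A)
    (hcut : ∀ a ∈ A, ∀ b ∉ A, f a b = 0) : flowValue f s ≤ 0 := by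
  set out : V → ℕ := fun a => ∑ y ∈ univ.erase a, f a y
  set inn : V → ℕ := fun a => ∑ y ∈ univ.erase a, f y a
  have hA : ∑ a ∈ A, out a ≤ ∑ a ∈ A, inn a := by
    have hsplit_out (a : V) : ∑ y, f a y = f a a + out a :=
      (add_sum_erase _ _ (mem_univ a)).symm
    have hsplit_in (a : V) : ∑ y, f y a = f a a + inn a :=
      (add_sum_erase _ _ (mem_univ a)).symm
    have h := sum_sum_le_sum_sum_of_forall_not_mem f A hcut
    simp only [hsplit_out, hsplit_in, sum_add_distrib] at h
    exact Nat.le_of_add_le_add_left h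
  have hconserved : ∑ a ∈ A.erase s, out a = ∑ a ∈ A.erase s, inn a :=
    sum_congr rfl fun a ha =>
      hf.2 a (ne_of_mem_erase ha) fun hat => ht (hat ▸ mem_of_mem_erase ha)
  rw [← add_sum_erase A _ hs, ← add_sum_erase A _ hs, hconserved] at hA
  have hs_out_le_in : out s ≤ inn s := Nat.le_of_add_le_add_right hA
  simp only [flowValue, ← Nat.cast_sum, sub_nonpos]
  exact_mod_cast hs_out_le_in

lemma maxFlow_eq_zero_of_cut {c : V → V → ℕ} {s t : V} (A : Finset V) (hs : s ∈ A)
    (ht : t ∉ A) (hcut : ∀ a ∈ A, ∀ b ∉ A, c a b = 0) : maxFlow c s t = 0 := by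
  refine maxFlow_eq_zero_of_forall_flowValue_nonpos fun f hf =>
    hf.flowValue_nonpos_of_cut A hs ht fun a ha b hb => ?_
  have hab : a ≠ b := by rintro rfl; exact hb ha
  simpa [hcut a ha b hb] using hf.1 a b hab

lemma maxFlow_pos_of_capacity_pos {c : V → V → ℕ} {s t : V} (hst : s ≠ t) (hc : 0 < c s t) :
    0 < maxFlow c s t := by
  have harc : IsFlow c s t fun u v => if u = s ∧ v = t then 1 else 0 := by
    refine ⟨fun u v _ => ?_, fun z hzs hzt => ?_⟩
    · show (if u = s ∧ v = t then 1 else 0) ≤ c u v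
      split_ifs with h
      · obtain ⟨rfl, rfl⟩ := h; exact hc
      · exact Nat.zero_le _
    · simp [hzs, hzt]
  have hval : flowValue (fun u v => if u = s ∧ v = t then 1 else 0) s = ((1 : ℕ) : ℤ) := by
    simp [flowValue, hst, Ne.symm hst]
  rw [maxFlow_eq_sSup_flowValues]
  exact le_csSup (bddAbove_flowValues_s4 c s t) ⟨_, harc, hval⟩

end Flows

section StrictPartNetwork

variable {V : Type*} [Fintype V] [DecidableEq V] {R : V → V → Prop} [DecidableRel R]

variable (R) in
/-- The network `N_R`. -/
def strictPartNetwork : V → V → ℕ := fun u v => if R u v ∧ ¬ R v u then 1 else 0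

lemma maxFlow_strictPartNetwork_pos_iff (hq : QuasiTransitive R) {x y : V} (hxy : x ≠ y) :
    0 < maxFlow (strictPartNetwork R) x y ↔ StrictPart R x y := by
  refine ⟨fun hpos => ?_, fun hS =>
    maxFlow_pos_of_capacity_pos hxy (by simp [strictPartNetwork, hS.1, hS.2])⟩
  by_contra hS
  let A : Finset V := univ.filter fun z => z = x ∨ (R x z ∧ ¬ R z x)
  have hcut : ∀ a ∈ A, ∀ b ∉ A, strictPartNetwork R a b = 0 := by
    intro a ha b hb
    simp only [A, mem_filter, mem_univ, true_and, not_or] at ha hb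
    refine if_neg fun hab => hb.2 ?_
    rcases ha with rfl | hxa
    · exact hab
    · exact hq hxa hab
  have hA : y ∉ A := by simpa [A, hxy.symm, StrictPart] using hS
  exact hpos.ne' (maxFlow_eq_zero_of_cut A (by simp [A]) hA hcut)

end StrictPartNetwork

lemma CompleteRel.not_strictPart_and_not_strictPart_iff {V : Type*} {R : V → V → Prop}
    (hc : CompleteRel R) {x y : V} :
    ¬ StrictPart R x y ∧ ¬ StrictPart R y x ↔ R x y ∧ R y x := by
  unfold StrictPart
  have := hc x y
  tauto

theorem stmt4_general {V : Type*} [Fintype V] [DecidableEq V]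
    (R : V → V → Prop) [DecidableRel R]
    (hc : CompleteRel R) (hq : QuasiTransitive R) :
    (∀ x y : V, x ≠ y →
      (0 < maxFlow (fun u v => if R u v ∧ ¬ R v u then 1 else 0) x y ↔
        StrictPart R x y)) ∧
    (∀ x y : V, x ≠ y →
      ((maxFlow (fun u v => if R u v ∧ ¬ R v u then 1 else 0) x y = 0 ∧
        maxFlow (fun u v => if R u v ∧ ¬ R v u then 1 else 0) y x = 0) ↔
        (R x y ∧ R y x))) := by
  have hpos : ∀ x y : V, x ≠ y →
      (0 < maxFlow (strictPartNetwork R) x y ↔ StrictPart R x y) :=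
    fun _ _ => maxFlow_strictPartNetwork_pos_iff hq
  refine ⟨hpos, fun x y hxy => ?_⟩
  rw [← hc.not_strictPart_and_not_strictPart_iff, ← hpos x y hxy, ← hpos y x hxy.symm]
  simp only [not_lt, Nat.le_zero]
  exact Iff.rfl

/-- For a complete and quasi-transitive relation `R` and the network `N_R`
with capacity `1` on the arcs of `S(R)` and `0` elsewhere:
(i) `φ^{N_R}_{xy} > 0` iff `(x,y) ∈ S(R)`;
(ii) `φ^{N_R}_{xy} = φ^{N_R}_{yx} = 0` iff `x ∼_R y`. -/
theorem stmt4 {V : Type*} [Fintype V] [DecidableEq V]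
    (hV : 2 ≤ Fintype.card V) (R : V → V → Prop) [DecidableRel R]
    (hc : CompleteRel R) (hq : QuasiTransitive R) :
    (∀ x y : V, x ≠ y →
      (0 < maxFlow (fun u v => if R u v ∧ ¬ R v u then 1 else 0) x y ↔
        StrictPart R x y)) ∧
    (∀ x y : V, x ≠ y →
      ((maxFlow (fun u v => if R u v ∧ ¬ R v u then 1 else 0) x y = 0 ∧
        maxFlow (fun u v => if R u v ∧ ¬ R v u then 1 else 0) y x = 0) ↔
        (R x y ∧ R y x))) :=
  stmt4_general R hc hq
end

section
/- Let V be a finite nonempty set of size n, R a complete and quasi-acyclic relation on V, and k ∈ {1,…,n−1} (with n ≥ 2). Then the set of k-maximum sets of R equals the union, over all linear refinements L of R, of the sets of k-maximum sets of L: C_k(R) = ⋃_{L ∈ 𝐋_⋄(R)} C_k(L). In particular, 1 ≤ |C_k(R)| ≤ |𝐋_⋄(R)| and C_k(R) ≠ ∅. -/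
/-- `C_k(R)`: the set of `k`-maximum sets of the relation `R`. -/
def kMaxSets {V : Type*} [Fintype V] [DecidableEq V]
    (R : V → V → Prop) (k : ℕ) : Set (Finset V) :=
  {W : Finset V | W.card = k ∧ ∀ x ∈ W, ∀ y ∉ W, R x y}

/-!
A linear refinement `L` of `R` is in particular a subrelation, so every `k`-maximum set of `L` is
one of `R`. Conversely, if `W` is a `k`-maximum set of `R`, take any linear refinement `L` of `R`
(a linear extension of the acyclic strict part `S(R)`, which is contained in `R` by completeness)
and reorder it so that `W` comes first while keeping the order of `L` inside `W` and inside its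
complement: the result is still a linear refinement of `R`, and `W` is `k`-maximum for it.
Since a linear order has exactly one `k`-maximum set for each `k ≤ n`, this gives both the
nonemptiness and the bound by `|𝐋_⋄(R)|`.
-/

theorem List.exists_nodup_isChain_cons_of_reflTransGen {α : Type*} {r : α → α → Prop} {a b : α}
    (h : Relation.ReflTransGen r a b) :
    ∃ l, (a :: l).Nodup ∧ (a :: l).IsChain r ∧ (a :: l).getLast (cons_ne_nil a l) = b := by
  induction h using Relation.ReflTransGen.head_induction_on with
  | refl => exact ⟨[], nodup_singleton _, .singleton _, rfl⟩
  | @head a c hac _ ih =>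
    obtain ⟨l, hnd, hch, hlast⟩ := ih
    by_cases ha : a ∈ c :: l
    · obtain ⟨s, t, hst⟩ := append_of_mem ha
      have hsuf : a :: t <:+ c :: l := ⟨s, hst.symm⟩
      refine ⟨t, hnd.sublist hsuf.sublist, hch.suffix hsuf, ?_⟩
      rw [← hlast]
      simp [hst]
    · exact ⟨c :: l, nodup_cons.2 ⟨ha, hnd⟩, hch.cons_cons hac, by simpa using hlast⟩

theorem AcyclicRel.not_transGen_self {α : Type*} {P : α → α → Prop} (ha : AcyclicRel P)
    (hi : ∀ x, ¬ P x x) (x : α) : ¬ Relation.TransGen P x x := by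
  intro hx
  obtain ⟨b, hxb, hbx⟩ := Relation.TransGen.tail'_iff.mp hx
  obtain ⟨l, hnd, hch, hlast⟩ := List.exists_nodup_isChain_cons_of_reflTransGen hxb
  rcases List.eq_nil_or_concat' l with rfl | ⟨l, y, rfl⟩
  · exact hi x (by simpa [← hlast] using hbx)
  · obtain rfl : y = b := by simpa using hlast
    exact ha x y l hnd hch hbx

theorem Set.ncard_biUnion_le_of_subsingleton {ι α : Type*} {t : Set ι} (ht : t.Finite)
    {s : ι → Set α} (hs : ∀ i ∈ t, (s i).Subsingleton) : (⋃ i ∈ t, s i).ncard ≤ t.ncard := by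
  lift t to Finset ι using ht
  calc (⋃ i ∈ (t : Set ι), s i).ncard ≤ ∑ i ∈ t, (s i).ncard := by
        simpa using t.set_ncard_biUnion_le s
    _ ≤ ∑ _ ∈ t, 1 := Finset.sum_le_sum fun i hi => (ncard_le_one (hs i hi).finite).mpr (hs i hi)
    _ = (t : Set ι).ncard := by simp

section LinearRel

variable {V : Type*}

theorem CompleteRel.refl {R : V → V → Prop} (hc : CompleteRel R) (x : V) : R x x :=
  (hc x x).elim id id

theorem linExtensions_nonempty {Q : V → V → Prop} (hQ : ∀ x, ¬ Relation.TransGen Q x x) :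
    (linExtensions Q).Nonempty := by
  have : IsPartialOrder V (Relation.ReflTransGen Q) :=
    { refl := fun _ => .refl
      trans := fun _ _ _ => .trans
      antisymm := fun x y hxy hyx => by
        rcases Relation.reflTransGen_iff_eq_or_transGen.mp hxy with rfl | hxy
        · rfl
        rcases Relation.reflTransGen_iff_eq_or_transGen.mp hyx with rfl | hyx
        · rfl
        exact (hQ x (hxy.trans hyx)).elim }
  obtain ⟨L, hL, hQL⟩ := extend_partialOrder (Relation.ReflTransGen Q)
  exact ⟨L, ⟨total_of L, fun _ _ _ => _root_.trans, fun _ _ => _root_.antisymm⟩,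
    fun x y hxy => hQL x y (.single hxy)⟩

theorem linExtensions_strictPart_subset {R : V → V → Prop} (hc : CompleteRel R) :
    linExtensions (StrictPart R) ⊆ linRefinements R := by
  refine fun L ⟨hL, hSL⟩ => ⟨hL, fun x y hxy => ?_⟩
  by_contra hR
  obtain rfl : x = y := hL.2.2 x y hxy (hSL y x ⟨(hc x y).resolve_left hR, hR⟩)
  exact hR (hc.refl x)

theorem linRefinements_nonempty {R : V → V → Prop} (hc : CompleteRel R)
    (ha : AcyclicRel (StrictPart R)) : (linRefinements R).Nonempty :=
  (linExtensions_nonempty (ha.not_transGen_self fun _ hx => hx.2 hx.1)).mono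
    (linExtensions_strictPart_subset hc)

theorem IsLinearRel.exists_forall_rel {L : V → V → Prop} (hL : IsLinearRel L) {s : Finset V}
    (hs : s.Nonempty) : ∃ m ∈ s, ∀ y ∈ s, L m y := by
  induction hs using Finset.Nonempty.cons_induction with
  | singleton a => exact ⟨a, by simp, by simpa using hL.1.refl a⟩
  | cons a s _ _ ih =>
    obtain ⟨m, hm, hmy⟩ := ih
    rcases hL.1 a m with ham | hma
    · exact ⟨a, by simp, by simpa using ⟨hL.1.refl a, fun y hy => hL.2.1 ham (hmy y hy)⟩⟩
    · exact ⟨m, by simp [hm], by simpa using ⟨hma, hmy⟩⟩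

def moveToTop (W : Finset V) (L : V → V → Prop) (x y : V) : Prop :=
  x ∈ W ∧ y ∉ W ∨ (x ∈ W ↔ y ∈ W) ∧ L x y

theorem IsLinearRel.moveToTop {L : V → V → Prop} (hL : IsLinearRel L) (W : Finset V) :
    IsLinearRel (moveToTop W L) := by
  obtain ⟨hc, ht, ha⟩ := hL
  refine ⟨fun x y => ?_, fun x y z => ?_, fun x y => ?_⟩ <;> unfold _root_.moveToTop
  · have := hc x y
    tauto
  · have := @ht x y z
    tauto
  · have := ha x y
    tauto

end LinearRel

section kMaxSets

variable {V : Type*} [Fintype V] [DecidableEq V]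

theorem kMaxSets_mono {L R : V → V → Prop} (hLR : ∀ x y, L x y → R x y) (k : ℕ) :
    kMaxSets L k ⊆ kMaxSets R k :=
  fun _ ⟨hcard, hW⟩ => ⟨hcard, fun x hx y hy => hLR x y (hW x hx y hy)⟩

theorem IsLinearRel.kMaxSets_nonempty {L : V → V → Prop} (hL : IsLinearRel L) {k : ℕ}
    (hk : k ≤ Fintype.card V) : (kMaxSets L k).Nonempty := by
  induction k with
  | zero => exact ⟨∅, rfl, by simp⟩
  | succ k ih =>
    obtain ⟨W, hcard, hW⟩ := ih (by omega)
    have hWc : Wᶜ.Nonempty := by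
      rw [← Finset.card_pos, Finset.card_compl]
      omega
    obtain ⟨m, hm, hmy⟩ := hL.exists_forall_rel hWc
    rw [Finset.mem_compl] at hm
    refine ⟨insert m W, by rw [Finset.card_insert_of_notMem hm, hcard], fun x hx y hy => ?_⟩
    rw [Finset.mem_insert, not_or] at hy
    rcases Finset.mem_insert.mp hx with rfl | hx
    · exact hmy y (Finset.mem_compl.mpr hy.2)
    · exact hW x hx y hy.2

theorem IsLinearRel.kMaxSets_subsingleton {L : V → V → Prop} (hL : IsLinearRel L) (k : ℕ) :
    (kMaxSets L k).Subsingleton := by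
  rintro W ⟨hW, hWL⟩ W' ⟨hW', hW'L⟩
  by_contra hne
  obtain ⟨x, hxW, hxW'⟩ : ∃ x ∈ W, x ∉ W' := Finset.not_subset.mp fun h =>
    hne (Finset.eq_of_subset_of_card_le h (by rw [hW, hW']))
  obtain ⟨y, hyW', hyW⟩ : ∃ y ∈ W', y ∉ W := Finset.not_subset.mp fun h =>
    hne (Finset.eq_of_subset_of_card_le h (by rw [hW, hW'])).symm
  obtain rfl := hL.2.2 x y (hWL x hxW y hyW) (hW'L y hyW' x hxW')
  exact hyW hxW

theorem mem_kMaxSets_moveToTop (W : Finset V) (L : V → V → Prop) :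
    W ∈ kMaxSets (moveToTop W L) W.card :=
  ⟨rfl, fun _ hx _ hy => .inl ⟨hx, hy⟩⟩

theorem moveToTop_mem_linRefinements {R L : V → V → Prop} (hL : L ∈ linRefinements R)
    {W : Finset V} {k : ℕ} (hW : W ∈ kMaxSets R k) : moveToTop W L ∈ linRefinements R :=
  ⟨hL.1.moveToTop W, fun x y hxy => hxy.elim (fun h => hW.2 x h.1 y h.2) (fun h => hL.2 x y h.2)⟩

theorem kMaxSets_eq_biUnion_linRefinements {R : V → V → Prop} (hc : CompleteRel R)
    (ha : AcyclicRel (StrictPart R)) (k : ℕ) :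
    kMaxSets R k = ⋃ L ∈ linRefinements R, kMaxSets L k := by
  obtain ⟨L, hL⟩ := linRefinements_nonempty hc ha
  refine subset_antisymm (fun W hW => ?_) (Set.iUnion₂_subset fun L hL => kMaxSets_mono hL.2 k)
  exact Set.mem_biUnion (moveToTop_mem_linRefinements hL hW)
    (hW.1 ▸ mem_kMaxSets_moveToTop W L)

end kMaxSets

theorem stmt18_general {V : Type*} [Fintype V] [DecidableEq V]
    (R : V → V → Prop) (hc : CompleteRel R)
    (ha : AcyclicRel (StrictPart R))
    (k : ℕ) (hk2 : k ≤ Fintype.card V - 1) :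
    kMaxSets R k = (⋃ L ∈ linRefinements R, kMaxSets L k) ∧
      1 ≤ (kMaxSets R k).ncard ∧
      (kMaxSets R k).ncard ≤ (linRefinements R).ncard ∧
      (kMaxSets R k).Nonempty := by
  have hunion := kMaxSets_eq_biUnion_linRefinements hc ha k
  obtain ⟨L, hL⟩ := linRefinements_nonempty hc ha
  have hne : (kMaxSets R k).Nonempty :=
    (hL.1.kMaxSets_nonempty (by omega)).mono (kMaxSets_mono hL.2 k)
  refine ⟨hunion, (Set.ncard_pos (Set.toFinite _)).mpr hne, ?_, hne⟩
  rw [hunion]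
  exact Set.ncard_biUnion_le_of_subsingleton (Set.toFinite _)
    fun L hL => hL.1.kMaxSets_subsingleton k

/-- For a complete and quasi-acyclic relation `R` and `1 ≤ k ≤ n − 1`,
`C_k(R)` is the union of the `C_k(L)` over the linear refinements `L` of `R`;
in particular `1 ≤ |C_k(R)| ≤ |𝐋_⋄(R)|` and `C_k(R) ≠ ∅`. -/
theorem stmt18 {V : Type*} [Fintype V] [DecidableEq V]
    (hn : 2 ≤ Fintype.card V)
    (R : V → V → Prop) (hc : CompleteRel R)
    (ha : AcyclicRel (StrictPart R))
    (k : ℕ) (hk1 : 1 ≤ k) (hk2 : k ≤ Fintype.card V - 1) :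
    kMaxSets R k = (⋃ L ∈ linRefinements R, kMaxSets L k) ∧
      1 ≤ (kMaxSets R k).ncard ∧
      (kMaxSets R k).ncard ≤ (linRefinements R).ncard ∧
      (kMaxSets R k).Nonempty :=
  stmt18_general R hc ha k hk2
end
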